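/- arXiv:0907.2228 — 2 statements merged into one kernel-verified Lean document; each statement's English description precedes it below -/
import Mathlib

section
/- Let γ : [0,1] → ℝ^d be a continuous curve, and for z ∈ Z^d let C_z = [z−1/2, z+1/2)^d be the unit cube centered at z. Then the set Γ = { z ∈ Z^d : γ([0,1]) ∩ C_z ≠ ∅ } of cubes met by γ is *-connected, where z, z' are *-adjacent iff max_i |z^i − z'^i| ≤ 1. -/
/-!
Sample the curve so finely (by uniform continuity on `[0, 1]`) that consecutive samples are at
distance at most `1`. Consecutive samples then have coordinates differing by at most `1`, so
the centres of their cubes, obtained by rounding each coordinate, are `*`-adjacent.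
-/

def starAdj {d : ℕ} (z z' : Fin d → ℤ) : Prop := ∀ i, |z i - z' i| ≤ 1

def starConnected {d : ℕ} (Γ : Set (Fin d → ℤ)) : Prop :=
  ∀ a ∈ Γ, ∀ b ∈ Γ, ∃ l : List (Fin d → ℤ),
    l.Chain' starAdj ∧ l.head? = some a ∧ l.getLast? = some b ∧ ∀ z ∈ l, z ∈ Γ

/-- `x` lies in the unit cube `C_z = [z - 1/2, z + 1/2)^d` centered at the lattice point `z`. -/
def inCube {d : ℕ} (z : Fin d → ℤ) (x : EuclideanSpace ℝ (Fin d)) : Prop :=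
  ∀ i, (z i : ℝ) - 1/2 ≤ x i ∧ x i < (z i : ℝ) + 1/2

theorem Int.abs_floor_sub_floor_le_one {R : Type*} [Ring R] [LinearOrder R] [FloorRing R]
    [IsOrderedRing R] {x y : R} (h : |x - y| ≤ 1) : |⌊x⌋ - ⌊y⌋| ≤ 1 := by
  have hyx : ⌊y⌋ ≤ ⌊x⌋ + 1 :=
    Int.floor_add_one x ▸ Int.floor_le_floor (sub_le_iff_le_add'.mp (abs_sub_le_iff.mp h).2)
  have hxy : ⌊x⌋ ≤ ⌊y⌋ + 1 :=
    Int.floor_add_one y ▸ Int.floor_le_floor (sub_le_iff_le_add'.mp (abs_sub_le_iff.mp h).1)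
  rw [abs_le]
  omega

theorem exists_isChain_dist_lt_of_continuousOn {E X : Type*} [NormedAddCommGroup E]
    [NormedSpace ℝ E] [PseudoMetricSpace X] {S : Set E} (hSc : IsCompact S)
    (hSconv : Convex ℝ S) {f : E → X} (hf : ContinuousOn f S) {s t : E} (hs : s ∈ S)
    (ht : t ∈ S) {ε : ℝ} (hε : 0 < ε) :
    ∃ l : List E, l.IsChain (fun u v => dist (f u) (f v) < ε) ∧ l.head? = some s ∧
      l.getLast? = some t ∧ ∀ u ∈ l, u ∈ S := by
  obtain ⟨δ, hδ, hfδ⟩ :=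
    Metric.uniformContinuousOn_iff.mp (hSc.uniformContinuousOn_of_continuous hf) ε hε
  obtain ⟨m, hm⟩ := exists_nat_gt (dist s t / δ)
  have hm0 : (0 : ℝ) < m := (div_nonneg dist_nonneg hδ.le).trans_lt hm
  set p : ℕ → E := fun k => AffineMap.lineMap s t ((k : ℝ) / m)
  have hpS : ∀ k ≤ m, p k ∈ S := fun k hk =>
    hSconv.lineMap_mem hs ht ⟨by positivity, div_le_one_of_le₀ (by exact_mod_cast hk) hm0.le⟩
  have hstep : ∀ k, dist (p k) (p (k + 1)) = dist s t / m := fun k => by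
    rw [dist_lineMap_lineMap, Real.dist_eq, Nat.cast_succ, ← sub_div, sub_add_cancel_left,
      abs_div, abs_neg, abs_one, Nat.abs_cast, one_div_mul_eq_div]
  refine ⟨(List.range (m + 1)).map p, ?_, ?_, ?_, ?_⟩
  · rw [List.isChain_map, List.isChain_range_succ]
    intro k hk
    refine hfδ _ (hpS k hk.le) _ (hpS (k + 1) hk) ?_
    rwa [hstep, div_lt_comm₀ hm0 hδ]
  · simp [p, List.head?_range]
  · simp [p, List.getLast?_range, hm0.ne']
  · simp only [List.mem_map, List.mem_range]
    rintro _ ⟨k, hk, rfl⟩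
    exact hpS k (Nat.lt_succ_iff.mp hk)

noncomputable def cubeCenter {d : ℕ} (x : EuclideanSpace ℝ (Fin d)) : Fin d → ℤ :=
  fun i => ⌊x i + 1/2⌋

theorem inCube_iff_eq_cubeCenter {d : ℕ} (z : Fin d → ℤ) (x : EuclideanSpace ℝ (Fin d)) :
    inCube z x ↔ z = cubeCenter x := by
  simp only [inCube, cubeCenter, funext_iff]
  refine forall_congr' fun i => ?_
  rw [eq_comm, Int.floor_eq_iff]
  constructor <;> rintro ⟨h1, h2⟩ <;> constructor <;> linarith

theorem starAdj_cubeCenter_of_dist_le_one {d : ℕ} {x y : EuclideanSpace ℝ (Fin d)}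
    (h : dist x y ≤ 1) : starAdj (cubeCenter x) (cubeCenter y) := fun i =>
  Int.abs_floor_sub_floor_le_one <| by
    rw [add_sub_add_right_eq_sub, ← Real.dist_eq]
    exact (PiLp.dist_apply_le x y i).trans h

theorem curve_trace_starConnected_general (d : ℕ)
    (γ : ℝ → EuclideanSpace ℝ (Fin d)) (hγ : ContinuousOn γ (Set.Icc 0 1)) :
    starConnected {z : Fin d → ℤ | ∃ t ∈ Set.Icc (0:ℝ) 1, inCube z (γ t)} := by
  rintro a ⟨s, hs, hsa⟩ b ⟨t, ht, htb⟩
  rw [inCube_iff_eq_cubeCenter] at hsa htb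
  obtain ⟨l, hchain, hhead, hlast, hmem⟩ :=
    exists_isChain_dist_lt_of_continuousOn isCompact_Icc (convex_Icc 0 1) hγ hs ht one_pos
  refine ⟨l.map (cubeCenter ∘ γ), ?_, ?_, ?_, ?_⟩
  · exact List.isChain_map _ |>.mpr <|
      hchain.imp fun u v huv => starAdj_cubeCenter_of_dist_le_one huv.le
  · simp [List.head?_map, hhead, hsa]
  · simp [List.getLast?_map, hlast, htb]
  · simp only [List.mem_map, Function.comp_apply]
    rintro _ ⟨u, hu, rfl⟩
    exact ⟨u, hmem u hu, (inCube_iff_eq_cubeCenter _ _).mpr rfl⟩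

/-- The set of lattice points whose cubes are met by a continuous curve is `*`-connected. -/
theorem curve_trace_starConnected (d : ℕ) (hd : 2 ≤ d)
    (γ : ℝ → EuclideanSpace ℝ (Fin d)) (hγ : ContinuousOn γ (Set.Icc 0 1)) :
    starConnected {z : Fin d → ℤ | ∃ t ∈ Set.Icc (0:ℝ) 1, inCube z (γ t)} :=
  curve_trace_starConnected_general d γ hγ
end

section
/- Suppose for each unit vector v, d(0,tv)/t → μ_v almost surely as t → ∞, μ : S^{d-1} → (0,∞) is continuous, and there is K > 0 such that almost surely, for each x, eventually d(tx, ty) ≤ Kt|x−y| for all y near x. Then the convergence is uniform over the sphere: for all ε > 0, almost surely there exists T such that |d(0,tv)/t − μ_v| ≤ ε for all t ≥ T and all v ∈ S^{d-1}. -/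
open Metric Filter

/-!
Pointwise convergence on a countable dense subset of the sphere holds almost surely, and so
does the large-scale Lipschitz estimate. For a fixed good sample, the Lipschitz estimate makes
`v ↦ d(0, tv)/t` asymptotically equicontinuous with modulus `K`, because the triangle
inequality gives `|d(0, x) - d(0, y)| ≤ d(x, y)`. Asymptotic equicontinuity, convergence on a
dense set and uniform continuity of the limit on a compact set give uniform convergence, via a
finite cover of the sphere by small balls centred in the dense set.
-/

theorem abs_sub_le_of_symm_of_triangle {α : Type*} {D : α → α → ℝ}
    (hsymm : ∀ x y, D x y = D y x) (htri : ∀ x y z, D x z ≤ D x y + D y z) (z x y : α) :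
    |D z x - D z y| ≤ D x y := by
  have h₁ := htri z x y
  have h₂ := htri z y x
  rw [hsymm y x] at h₂
  rw [abs_sub_le_iff]
  constructor <;> linarith

theorem tendstoUniformlyOn_of_tendsto_on_dense {ι X : Type*} [PseudoMetricSpace X]
    {l : Filter ι} {S A : Set X} (hS : IsCompact S) (hAS : A ⊆ S) (hSA : S ⊆ closure A)
    {F : ι → X → ℝ} {g : X → ℝ} (hg : ContinuousOn g S)
    (hF : ∀ a ∈ A, Tendsto (F · a) l (nhds (g a)))
    (hosc : ∀ ε > 0, ∃ ρ > 0, ∀ a ∈ A, ∀ᶠ i in l, ∀ y, dist a y < ρ →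
      dist (F i a) (F i y) ≤ ε) :
    TendstoUniformlyOn F g l S := by
  rw [Metric.tendstoUniformlyOn_iff]
  intro ε hε
  obtain ⟨ρ, hρ, hρosc⟩ := hosc (ε / 3) (by positivity)
  obtain ⟨δ, hδ, hδg⟩ :=
    Metric.uniformContinuousOn_iff.1 (hS.uniformContinuousOn_of_continuous hg) (ε / 3)
      (by positivity)
  set r := min ρ δ
  have hcover : S ⊆ ⋃ a ∈ A, ball a r := fun x hx ↦ by
    obtain ⟨a, ha, hxa⟩ := Metric.mem_closure_iff.1 (hSA hx) r (lt_min hρ hδ)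
    exact Set.mem_biUnion ha (mem_ball.2 hxa)
  obtain ⟨N, hNA, hN, hSN⟩ := hS.elim_finite_subcover_image (fun _ _ ↦ isOpen_ball) hcover
  have hnet : ∀ᶠ i in l, ∀ a ∈ N, dist (F i a) (g a) < ε / 3 ∧
      ∀ y, dist a y < ρ → dist (F i a) (F i y) ≤ ε / 3 :=
    hN.eventually_all.2 fun a ha ↦
      (Metric.tendsto_nhds.1 (hF a (hNA ha)) (ε / 3) (by positivity)).and (hρosc a (hNA ha))
  filter_upwards [hnet] with i hi y hy
  obtain ⟨a, ha, hya⟩ := Set.mem_iUnion₂.1 (hSN hy)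
  have hay : dist a y < r := by rw [dist_comm]; exact mem_ball.1 hya
  obtain ⟨hFa, hFosc⟩ := hi a ha
  have hgy : dist (g y) (g a) < ε / 3 := by
    rw [dist_comm]; exact hδg a (hAS (hNA ha)) y hy (hay.trans_le (min_le_right _ _))
  have hFy := hFosc y (hay.trans_le (min_le_left _ _))
  have := dist_triangle4 (g y) (g a) (F i a) (F i y)
  rw [dist_comm (g a)] at this
  linarith

theorem eventually_dist_scaled_le_of_large_scale_lipschitz {E : Type*} [NormedAddCommGroup E]
    [NormedSpace ℝ E] {D : E → E → ℝ}
    (hsymm : ∀ x y, D x y = D y x) (htri : ∀ x y z, D x z ≤ D x y + D y z)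
    {K : ℝ} (hK : 0 < K)
    (hlip : ∀ x : E, ∀ ρ : ℝ, 0 < ρ → ∃ T : ℝ, ∀ t ≥ T, ∀ y : E,
      ‖x - y‖ ≤ ρ → D (t • x) (t • y) ≤ K * t * ρ)
    {ε : ℝ} (hε : 0 < ε) (x : E) :
    ∀ᶠ t in atTop, ∀ y, dist x y < ε / K →
      dist (D 0 (t • x) / t) (D 0 (t • y) / t) ≤ ε := by
  obtain ⟨T, hT⟩ := hlip x (ε / K) (by positivity)
  filter_upwards [eventually_ge_atTop T, eventually_gt_atTop 0] with t hTt ht y hxy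
  rw [Real.dist_eq, ← sub_div, abs_div, abs_of_pos ht, div_le_iff₀ ht]
  calc |D 0 (t • x) - D 0 (t • y)| ≤ D (t • x) (t • y) :=
        abs_sub_le_of_symm_of_triangle hsymm htri 0 _ _
    _ ≤ K * t * (ε / K) := hT t hTt y (by rw [← dist_eq_norm]; exact hxy.le)
    _ = ε * t := by field_simp

theorem uniform_convergence_time_constant_general (d : ℕ)
    {Ω : Type*} [MeasurableSpace Ω] (μ : MeasureTheory.Measure Ω)
    (D : Ω → EuclideanSpace ℝ (Fin d) → EuclideanSpace ℝ (Fin d) → ℝ)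
    (hDsymm : ∀ ω x y, D ω x y = D ω y x)
    (hDtri : ∀ ω x y z, D ω x z ≤ D ω x y + D ω y z)
    (μv : EuclideanSpace ℝ (Fin d) → ℝ)
    (hμcont : ContinuousOn μv (sphere (0 : EuclideanSpace ℝ (Fin d)) 1))
    (hpt : ∀ v ∈ sphere (0 : EuclideanSpace ℝ (Fin d)) 1,
      ∀ᵐ ω ∂μ, Tendsto (fun t : ℝ => D ω 0 (t • v) / t) atTop (nhds (μv v)))
    (K : ℝ) (hK : 0 < K)
    (hlip : ∀ᵐ ω ∂μ, ∀ x : EuclideanSpace ℝ (Fin d), ∀ ρ : ℝ, 0 < ρ →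
      ∃ T : ℝ, ∀ t ≥ T, ∀ y : EuclideanSpace ℝ (Fin d),
        ‖x - y‖ ≤ ρ → D ω (t • x) (t • y) ≤ K * t * ρ) :
    ∀ ε : ℝ, 0 < ε → ∀ᵐ ω ∂μ, ∃ T : ℝ, ∀ t ≥ T,
      ∀ v ∈ sphere (0 : EuclideanSpace ℝ (Fin d)) 1,
        |D ω 0 (t • v) / t - μv v| ≤ ε := by
  intro ε hε
  have hS := isCompact_sphere (0 : EuclideanSpace ℝ (Fin d)) 1
  obtain ⟨A, hAS, hAc, hSA⟩ := hS.isSeparable.exists_countable_dense_subset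
  have hconv : ∀ᵐ ω ∂μ, ∀ v ∈ A,
      Tendsto (fun t : ℝ => D ω 0 (t • v) / t) atTop (nhds (μv v)) :=
    (MeasureTheory.ae_ball_iff hAc).2 fun v hv ↦ hpt v (hAS hv)
  filter_upwards [hconv, hlip] with ω hω hωlip
  have hunif := tendstoUniformlyOn_of_tendsto_on_dense hS hAS hSA hμcont hω
    fun η hη ↦ ⟨η / K, by positivity, fun v _ ↦
      eventually_dist_scaled_le_of_large_scale_lipschitz (hDsymm ω) (hDtri ω) hK hωlip hη v⟩
  obtain ⟨T, hT⟩ := eventually_atTop.1 (Metric.tendstoUniformlyOn_iff.1 hunif ε hε)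
  refine ⟨T, fun t ht v hv ↦ ?_⟩
  rw [abs_sub_comm, ← Real.dist_eq]
  exact (hT t ht v hv).le

/-- Uniform convergence of `d(0,tv)/t` to the time constant over the sphere,
from pointwise convergence, continuity of the time constant, and a uniform
large-scale Lipschitz estimate. -/
theorem uniform_convergence_time_constant (d : ℕ) (hd : 2 ≤ d)
    {Ω : Type*} [MeasurableSpace Ω] (μ : MeasureTheory.Measure Ω)
    [MeasureTheory.IsProbabilityMeasure μ]
    (D : Ω → EuclideanSpace ℝ (Fin d) → EuclideanSpace ℝ (Fin d) → ℝ)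
    (hDnonneg : ∀ ω x y, 0 ≤ D ω x y)
    (hDsymm : ∀ ω x y, D ω x y = D ω y x)
    (hDtri : ∀ ω x y z, D ω x z ≤ D ω x y + D ω y z)
    (μv : EuclideanSpace ℝ (Fin d) → ℝ)
    (hμcont : ContinuousOn μv (sphere (0 : EuclideanSpace ℝ (Fin d)) 1))
    (hμpos : ∀ v ∈ sphere (0 : EuclideanSpace ℝ (Fin d)) 1, 0 < μv v)
    (hpt : ∀ v ∈ sphere (0 : EuclideanSpace ℝ (Fin d)) 1,
      ∀ᵐ ω ∂μ, Tendsto (fun t : ℝ => D ω 0 (t • v) / t) atTop (nhds (μv v)))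
    (K : ℝ) (hK : 0 < K)
    (hlip : ∀ᵐ ω ∂μ, ∀ x : EuclideanSpace ℝ (Fin d), ∀ ρ : ℝ, 0 < ρ →
      ∃ T : ℝ, ∀ t ≥ T, ∀ y : EuclideanSpace ℝ (Fin d),
        ‖x - y‖ ≤ ρ → D ω (t • x) (t • y) ≤ K * t * ρ) :
    ∀ ε : ℝ, 0 < ε → ∀ᵐ ω ∂μ, ∃ T : ℝ, ∀ t ≥ T,
      ∀ v ∈ sphere (0 : EuclideanSpace ℝ (Fin d)) 1,
        |D ω 0 (t • v) / t - μv v| ≤ ε :=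
  uniform_convergence_time_constant_general d μ D hDsymm hDtri μv hμcont hpt K hK hlip
end
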